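/- arXiv:2602.17307 — 5 statements merged into one kernel-verified Lean document; each statement's English description precedes it below -/
import Mathlib

section
/- Let |\psi\rangle be a unit vector in a finite-dimensional complex Hilbert space H and let P_1, ..., P_N be orthogonal projections on H such that \langle\psi| P_i |\psi\rangle \ge 1 - \epsilon_i for each i. Then \|(P_N P_{N-1} \cdots P_1)|\psi\rangle\|^2 \ge 1 - 4 \sum_{i=1}^N \epsilon_i. -/
/-!
Track the potential `Φ(u) = 2‖u - ψ‖² - ‖u‖²` along the sequence `vₜ = Pₜ₋₁ ⋯ P₀ ψ`, so that
`Φ(v₀) = -‖ψ‖²` and `‖v_N‖² ≥ -Φ(v_N)`. Writing `u = vₜ`, `w = u - ψ`, `d = ‖w - Q w‖` and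
`s = ‖ψ - Q ψ‖` for the next projection `Q`, Pythagoras gives `‖Q u - ψ‖² = ‖w‖² - d² + s²`
(as `Q w ⟂ ψ - Q ψ`) and `‖Q u‖² ≥ ‖u‖² - (d + s)²`, hence
`Φ(Q u) ≤ Φ(u) + (d + s)² - 2d² + 2s² ≤ Φ(u) + 4s²`, and `s² = ‖ψ‖² - Re ⟪ψ, Q ψ⟫ ≤ ε`.
-/

open scoped InnerProductSpace
open RCLike

namespace LinearMap.IsSymmetricProjection

variable {𝕜 E : Type*} [RCLike 𝕜] [NormedAddCommGroup E] [InnerProductSpace 𝕜 E]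
  {Q : E →ₗ[𝕜] E}

theorem map_map (hQ : Q.IsSymmetricProjection) (x : E) : Q (Q x) = Q x :=
  congr($hQ.isIdempotentElem x)

theorem inner_map_sub_map_eq_zero (hQ : Q.IsSymmetricProjection) (x y : E) :
    ⟪Q x, y - Q y⟫_𝕜 = 0 := by
  rw [hQ.isSymmetric, map_sub, hQ.map_map, sub_self, inner_zero_right]

theorem re_inner_map_self_eq_norm_sq (hQ : Q.IsSymmetricProjection) (x : E) :
    re ⟪x, Q x⟫_𝕜 = ‖Q x‖ ^ 2 := by
  rw [← hQ.map_map x, ← hQ.isSymmetric, hQ.map_map, inner_self_eq_norm_sq]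

theorem norm_sq_eq_norm_map_sq_add_norm_sub_map_sq (hQ : Q.IsSymmetricProjection) (x : E) :
    ‖x‖ ^ 2 = ‖Q x‖ ^ 2 + ‖x - Q x‖ ^ 2 := by
  simpa [sq] using norm_add_sq_eq_norm_sq_add_norm_sq_of_inner_eq_zero _ _
    (hQ.inner_map_sub_map_eq_zero x x)

theorem norm_sub_map_sq (hQ : Q.IsSymmetricProjection) (x : E) :
    ‖x - Q x‖ ^ 2 = ‖x‖ ^ 2 - re ⟪x, Q x⟫_𝕜 := by
  rw [hQ.re_inner_map_self_eq_norm_sq, hQ.norm_sq_eq_norm_map_sq_add_norm_sub_map_sq x]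
  ring

theorem norm_map_sub_sq (hQ : Q.IsSymmetricProjection) (u ψ : E) :
    ‖Q u - ψ‖ ^ 2 = ‖u - ψ‖ ^ 2 - ‖u - ψ - Q (u - ψ)‖ ^ 2 + ‖ψ - Q ψ‖ ^ 2 := by
  have hsplit : Q u - ψ = Q (u - ψ) - (ψ - Q ψ) := by rw [map_sub]; abel
  rw [hsplit, @norm_sub_sq 𝕜, hQ.inner_map_sub_map_eq_zero, map_zero, mul_zero, sub_zero,
    hQ.norm_sq_eq_norm_map_sq_add_norm_sub_map_sq (u - ψ)]
  ring

theorem two_mul_norm_map_sub_sq_sub_norm_map_sq_le (hQ : Q.IsSymmetricProjection) (u ψ : E) :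
    2 * ‖Q u - ψ‖ ^ 2 - ‖Q u‖ ^ 2 ≤ 2 * ‖u - ψ‖ ^ 2 - ‖u‖ ^ 2 + 4 * ‖ψ - Q ψ‖ ^ 2 := by
  set d := ‖u - ψ - Q (u - ψ)‖
  set s := ‖ψ - Q ψ‖
  have hdefect : ‖u - Q u‖ ≤ d + s := by
    have : u - Q u = (u - ψ - Q (u - ψ)) + (ψ - Q ψ) := by rw [map_sub]; abel
    exact this ▸ norm_add_le _ _
  have hdefect_sq : ‖u - Q u‖ ^ 2 ≤ (d + s) ^ 2 := by gcongr
  have hu := hQ.norm_sq_eq_norm_map_sq_add_norm_sub_map_sq u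
  have hQu := hQ.norm_map_sub_sq u ψ
  nlinarith [sq_nonneg (d - s)]

end LinearMap.IsSymmetricProjection

theorem norm_sq_sub_four_mul_sum_le_norm_sq {𝕜 E : Type*} [RCLike 𝕜] [NormedAddCommGroup E]
    [InnerProductSpace 𝕜 E] {N : ℕ} {P : ℕ → E →ₗ[𝕜] E}
    (hP : ∀ i < N, (P i).IsSymmetricProjection) {v : ℕ → E} (hv : ∀ i < N, v (i + 1) = P i (v i)) :
    ‖v 0‖ ^ 2 - 4 * ∑ i ∈ Finset.range N, ‖v 0 - P i (v 0)‖ ^ 2 ≤ ‖v N‖ ^ 2 := by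
  suffices potential : ∀ t ≤ N, 2 * ‖v t - v 0‖ ^ 2 - ‖v t‖ ^ 2 ≤
      -‖v 0‖ ^ 2 + 4 * ∑ i ∈ Finset.range t, ‖v 0 - P i (v 0)‖ ^ 2 by
    nlinarith [potential N le_rfl, sq_nonneg ‖v N - v 0‖]
  intro t ht
  induction t with
  | zero => simp
  | succ t ih =>
    rw [hv t ht, Finset.sum_range_succ]
    linarith [ih (by omega), (hP t ht).two_mul_norm_map_sub_sq_sub_norm_map_sq_le (v t) (v 0)]

theorem quantum_union_bound_general
    {H : Type*} [NormedAddCommGroup H] [InnerProductSpace ℂ H]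
    (ψ : H) (hψ : ‖ψ‖ = 1) (N : ℕ) (P : ℕ → H →ₗ[ℂ] H) (ε : ℕ → ℝ)
    (hidem : ∀ i < N, P i ∘ₗ P i = P i)
    (hsa : ∀ i < N, ∀ x y : H, ⟪P i x, y⟫_ℂ = ⟪x, P i y⟫_ℂ)
    (hε : ∀ i < N, 1 - ε i ≤ (⟪ψ, P i ψ⟫_ℂ).re)
    (v : ℕ → H) (hv0 : v 0 = ψ) (hv : ∀ i, v (i + 1) = P i (v i)) :
    1 - 4 * ∑ i ∈ Finset.range N, ε i ≤ ‖v N‖ ^ 2 := by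
  have hP : ∀ i < N, (P i).IsSymmetricProjection := fun i hi => ⟨hidem i hi, hsa i hi⟩
  have hdefect : ∀ i ∈ Finset.range N, ‖ψ - P i ψ‖ ^ 2 ≤ ε i := by
    intro i hi
    rw [Finset.mem_range] at hi
    rw [(hP i hi).norm_sub_map_sq, hψ, one_pow, re_to_complex]
    linarith [hε i hi]
  calc 1 - 4 * ∑ i ∈ Finset.range N, ε i
      ≤ ‖ψ‖ ^ 2 - 4 * ∑ i ∈ Finset.range N, ‖ψ - P i ψ‖ ^ 2 := by
        rw [hψ, one_pow]; linarith [Finset.sum_le_sum hdefect]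
    _ ≤ ‖v N‖ ^ 2 := hv0 ▸ norm_sq_sub_four_mul_sum_le_norm_sq hP fun i _ => hv i

/-- Quantum union bound: sequentially applying projections that each almost fix a unit
state leaves a vector of squared norm at least `1 - 4 ∑ εᵢ`. -/
theorem quantum_union_bound
    {H : Type*} [NormedAddCommGroup H] [InnerProductSpace ℂ H] [FiniteDimensional ℂ H]
    (ψ : H) (hψ : ‖ψ‖ = 1) (N : ℕ) (P : ℕ → H →ₗ[ℂ] H) (ε : ℕ → ℝ)
    (hidem : ∀ i < N, P i ∘ₗ P i = P i)
    (hsa : ∀ i < N, ∀ x y : H, ⟪P i x, y⟫_ℂ = ⟪x, P i y⟫_ℂ)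
    (hε : ∀ i < N, 1 - ε i ≤ (⟪ψ, P i ψ⟫_ℂ).re)
    (v : ℕ → H) (hv0 : v 0 = ψ) (hv : ∀ i, v (i + 1) = P i (v i)) :
    1 - 4 * ∑ i ∈ Finset.range N, ε i ≤ ‖v N‖ ^ 2 :=
  quantum_union_bound_general ψ hψ N P ε hidem hsa hε v hv0 hv
end

section
/- Let m \ge n \ge 1 be integers, let H = (C^{2^l})^{\otimes m} \otimes H_E for a finite-dimensional space H_E, and let W be the span of vectors of the form |+^l\rangle^{\otimes S} \otimes |\phi\rangle where S \subseteq [m] has |S| \ge n and |\phi\rangle is arbitrary on the remaining registers. Let |\psi\rangle \in W \otimes H_E be a unit vector invariant in norm under all permutations of the m registers (i.e., \|A \pi |\psi\rangle\| = \|A|\psi\rangle\| for every operator A on the m registers and every permutation \pi). Then the probability of obtaining outcome 0^l when measuring the first register in the computational basis satisfies \|\langle 0^l|_1 |\psi\rangle\|^2 \ge 2^{-l} n/m - 2^{1-l/2} \sqrt{n(m-n)}/m. -/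
/-!
Let `hadamard` be the Walsh–Hadamard transform on all registers and `Πᵢ` the projector onto
`0^l` in register `i`, so that `hadamard ∘ Πᵢ ∘ hadamard` projects onto `|+^l⟩` in register `i`.
A generator of `W` does not change when a register of `S` changes, so `hadamard ψ` vanishes on
strings with fewer than `n` zero registers; hence `∑ᵢ ‖Πᵢ (hadamard ψ)‖² ≥ n`, and by permutation
symmetry all terms equal `t = ‖Π₁ (hadamard ψ)‖²`, so `t ≥ n / m`. The `|+^l⟩`-component
`a = hadamard (Π₁ (hadamard ψ))` is orthogonal to `ψ - a`, has `‖a‖² = t`, and is constant in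
register `1`, so `‖Π₁ a‖² = t / 2^l`. Therefore `‖Π₁ ψ‖ ≥ ‖Π₁ a‖ - ‖ψ - a‖ = √(t / 2^l) - √(1 - t)`.
-/

open Finset

namespace SymmetricMeasurement

section Kernel

variable {ι α : Type*} [Fintype ι] (k : α → α → ℝ)

def prodKernel (x y : ι → α) : ℝ := ∏ i, k (x i) (y i)

lemma prodKernel_comm (hk : ∀ a b, k a b = k b a) (x y : ι → α) :
    prodKernel k x y = prodKernel k y x :=
  prod_congr rfl fun _ _ => hk _ _

lemma sum_prodKernel_mul [Fintype α] [DecidableEq ι] [DecidableEq α] {N : ℝ}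
    (hk : ∀ a c, ∑ b, k a b * k c b = if a = c then N else 0) (x z : ι → α) :
    ∑ y, prodKernel k x y * prodKernel k z y = if x = z then N ^ Fintype.card ι else 0 := by
  simp_rw [prodKernel, ← prod_mul_distrib]
  rw [← Fintype.prod_sum fun i b => k (x i) b * k (z i) b]
  simp_rw [hk]
  split_ifs with h
  · simp [h]
  · obtain ⟨i, hi⟩ := Function.ne_iff.mp h
    exact prod_eq_zero (mem_univ i) (if_neg hi)

lemma prodKernel_update_right [DecidableEq ι] {x y : ι → α} {i : ι} {a : α} {c : ℝ}
    (h : k (x i) a = c * k (x i) (y i)) :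
    prodKernel k x (Function.update y i a) = c * prodKernel k x y := by
  simp only [prodKernel]
  rw [Fintype.prod_eq_mul_prod_compl i, Fintype.prod_eq_mul_prod_compl i,
    Function.update_self, h, mul_assoc]
  congr 2
  exact prod_congr rfl fun j hj => by rw [Function.update_of_ne (by simpa using hj)]

lemma prodKernel_comp_perm (σ : Equiv.Perm ι) (x y : ι → α) :
    prodKernel k (x ∘ σ) (y ∘ σ) = prodKernel k x y :=
  Equiv.prod_comp σ fun i => k (x i) (y i)

end Kernel

-- `(-1)^(a b)`; products of it give the Walsh–Hadamard matrix entries `(-1)^(x ⬝ y)`.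
def bitSign (a b : Fin 2) : ℝ := if a = 1 ∧ b = 1 then -1 else 1

lemma bitSign_comm (a b : Fin 2) : bitSign a b = bitSign b a := by
  unfold bitSign; fin_cases a <;> fin_cases b <;> rfl

lemma sum_bitSign_mul (a c : Fin 2) :
    ∑ b, bitSign a b * bitSign c b = if a = c then 2 else 0 := by
  fin_cases a <;> fin_cases c <;> norm_num [bitSign, Fin.sum_univ_two]

section Walsh

variable {l : ℕ}

def walsh (x y : Fin l → Fin 2) : ℝ := prodKernel bitSign x y

lemma walsh_comm (x y : Fin l → Fin 2) : walsh x y = walsh y x :=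
  prodKernel_comm _ bitSign_comm x y

lemma walsh_zero_right (x : Fin l → Fin 2) : walsh x 0 = 1 := by
  simp [walsh, prodKernel, bitSign]

lemma walsh_zero_left (y : Fin l → Fin 2) : walsh 0 y = 1 := by
  rw [walsh_comm, walsh_zero_right]

lemma sum_walsh_mul (x z : Fin l → Fin 2) :
    ∑ y, walsh x y * walsh z y = if x = z then 2 ^ l else 0 := by
  simpa [walsh] using sum_prodKernel_mul bitSign sum_bitSign_mul x z

lemma sum_walsh_eq_zero {x : Fin l → Fin 2} (hx : x ≠ 0) : ∑ y, walsh x y = 0 := by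
  simpa [walsh_zero_left, hx] using sum_walsh_mul x 0

end Walsh

lemma sum_eq_sum_filter_sum_update {ι α M : Type*} [Fintype ι] [DecidableEq ι] [Fintype α]
    [DecidableEq α] [AddCommMonoid M] (i : ι) (o : α) (F : (ι → α) → M) :
    ∑ x, F x = ∑ x with x i = o, ∑ a, F (Function.update x i a) := by
  rw [← sum_product' (f := fun x a => F (Function.update x i a))]
  symm
  refine sum_nbij' (fun p => Function.update p.1 i p.2) (fun x => (Function.update x i o, x i))
    (by simp) (by simp) (fun p hp => Prod.ext (by simp_all) (by simp)) (by simp) (by simp)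

section CoordMask

variable {κ : Type*}

def coordMask (p : κ → Prop) [DecidablePred p] :
    EuclideanSpace ℂ κ →ₗ[ℂ] EuclideanSpace ℂ κ where
  toFun v := WithLp.toLp 2 fun q => if p q then v q else 0
  map_add' v w := by ext q; by_cases h : p q <;> simp [h]
  map_smul' c v := by ext q; by_cases h : p q <;> simp [h]

variable (p : κ → Prop) [DecidablePred p]

@[simp]
lemma coordMask_apply (v : EuclideanSpace ℂ κ) (q : κ) :
    coordMask p v q = if p q then v q else 0 := rfl

variable [Fintype κ]

lemma norm_sq_coordMask (v : EuclideanSpace ℂ κ) :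
    ‖coordMask p v‖ ^ 2 = ∑ q with p q, ‖v q‖ ^ 2 := by
  rw [EuclideanSpace.norm_sq_eq, sum_filter]
  exact sum_congr rfl fun q _ => by split_ifs <;> simp [*]

lemma norm_coordMask_le (v : EuclideanSpace ℂ κ) : ‖coordMask p v‖ ≤ ‖v‖ := by
  refine le_of_sq_le_sq ?_ (norm_nonneg v)
  rw [norm_sq_coordMask, EuclideanSpace.norm_sq_eq]
  exact sum_le_sum_of_subset_of_nonneg (filter_subset _ _) fun _ _ _ => by positivity

lemma inner_coordMask_sub_self (v : EuclideanSpace ℂ κ) :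
    inner ℂ (coordMask p v) (v - coordMask p v) = 0 := by
  rw [PiLp.inner_apply]
  exact sum_eq_zero fun q _ => by by_cases h : p q <;> simp [h]

lemma natCast_mul_norm_sq_le_sum_norm_sq_coordMask {ι : Type*} [Fintype ι] (P : ι → κ → Prop)
    [∀ i, DecidablePred (P i)] {n : ℕ} {v : EuclideanSpace ℂ κ}
    (hv : ∀ q, #{i | P i q} < n → v q = 0) :
    n * ‖v‖ ^ 2 ≤ ∑ i, ‖coordMask (P i) v‖ ^ 2 := by
  simp_rw [norm_sq_coordMask, sum_filter, EuclideanSpace.norm_sq_eq]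
  rw [sum_comm, mul_sum]
  refine sum_le_sum fun q _ => ?_
  rw [← sum_filter, sum_const, nsmul_eq_mul]
  by_cases hq : #{i | P i q} < n
  · simp [hv q hq]
  · gcongr
    exact_mod_cast not_lt.mp hq

end CoordMask

section Hadamard

variable {ι E : Type*} [Fintype ι] {l : ℕ}

local notation "𝓗" => EuclideanSpace ℂ ((ι → Fin l → Fin 2) × E)

def hadamardKernel (x y : ι → Fin l → Fin 2) : ℝ := prodKernel walsh x y

lemma hadamardKernel_comm (x y : ι → Fin l → Fin 2) : hadamardKernel x y = hadamardKernel y x :=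
  prodKernel_comm _ walsh_comm x y

lemma hadamardKernel_comp_perm (σ : Equiv.Perm ι) (x y : ι → Fin l → Fin 2) :
    hadamardKernel (x ∘ σ) (y ∘ σ) = hadamardKernel x y :=
  prodKernel_comp_perm _ σ x y

variable (ι l) in
noncomputable def hadamardScale : ℝ := (√(2 ^ l))⁻¹ ^ Fintype.card ι

lemma hadamardScale_sq_mul : hadamardScale ι l ^ 2 * ((2 : ℝ) ^ l) ^ Fintype.card ι = 1 := by
  rw [hadamardScale, ← pow_mul, pow_mul', inv_pow, Real.sq_sqrt (by positivity), ← mul_pow,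
    inv_mul_cancel₀ (by positivity), one_pow]

variable [DecidableEq ι]

lemma sum_hadamardKernel_mul (x z : ι → Fin l → Fin 2) :
    ∑ y, hadamardKernel x y * hadamardKernel z y =
      if x = z then ((2 : ℝ) ^ l) ^ Fintype.card ι else 0 :=
  sum_prodKernel_mul walsh sum_walsh_mul x z

lemma hadamardKernel_update_of_eq_zero {x y : ι → Fin l → Fin 2} {i : ι} (hy : y i = 0)
    (a : Fin l → Fin 2) :
    hadamardKernel x (Function.update y i a) = walsh (x i) a * hadamardKernel x y :=
  prodKernel_update_right walsh (by rw [hy, walsh_zero_right, mul_one])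

lemma hadamardKernel_update_of_left_eq_zero {x y : ι → Fin l → Fin 2} {i : ι} (hx : x i = 0)
    (a : Fin l → Fin 2) : hadamardKernel x (Function.update y i a) = hadamardKernel x y :=
  (prodKernel_update_right walsh (by rw [hx, walsh_zero_left, walsh_zero_left, one_mul])).trans
    (one_mul _)

noncomputable def hadamard : 𝓗 →ₗ[ℂ] 𝓗 where
  toFun v := WithLp.toLp 2 fun q =>
    hadamardScale ι l * ∑ y, (hadamardKernel q.1 y : ℂ) * v (y, q.2)
  map_add' v w := by ext q; simp [mul_add, sum_add_distrib]
  map_smul' c v := by ext q; simp [mul_sum, mul_left_comm]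

lemma hadamard_apply (v : 𝓗) (x : ι → Fin l → Fin 2) (e : E) :
    hadamard v (x, e) = hadamardScale ι l * ∑ y, (hadamardKernel x y : ℂ) * v (y, e) := rfl

lemma hadamard_hadamard (v : 𝓗) : hadamard (hadamard v) = v := by
  ext ⟨x, e⟩
  have hcollapse : ∀ z, ∑ y, (hadamardScale ι l : ℂ) * hadamardKernel x y *
      hadamardScale ι l * hadamardKernel y z * v (z, e) = if x = z then v (z, e) else 0 := by
    intro z
    have h : ∑ y, (hadamardScale ι l : ℂ) * hadamardKernel x y *
        hadamardScale ι l * hadamardKernel y z * v (z, e) =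
        ((hadamardScale ι l ^ 2 * ∑ y, hadamardKernel x y * hadamardKernel z y : ℝ) : ℂ) *
          v (z, e) := by
      push_cast
      rw [mul_sum, sum_mul]
      exact sum_congr rfl fun y _ => by rw [hadamardKernel_comm z]; ring
    rw [h, sum_hadamardKernel_mul]
    split_ifs <;> simp [hadamardScale_sq_mul]
  simp_rw [hadamard_apply, mul_sum, ← mul_assoc]
  rw [sum_comm]
  simp_rw [hcollapse, sum_ite_eq, if_pos (mem_univ _)]

abbrev projZeroAt (i : ι) : 𝓗 →ₗ[ℂ] 𝓗 := coordMask fun q => q.1 i = 0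

lemma hadamard_apply_eq_zero_of_update_invariant {v : 𝓗} {i : ι}
    (hv : ∀ x a e, v (Function.update x i a, e) = v (x, e)) {x : ι → Fin l → Fin 2}
    (hx : x i ≠ 0) (e : E) : hadamard v (x, e) = 0 := by
  rw [hadamard_apply, sum_eq_sum_filter_sum_update i 0, sum_eq_zero, mul_zero]
  intro y hy
  simp_rw [hv, hadamardKernel_update_of_eq_zero (mem_filter.mp hy).2, Complex.ofReal_mul,
    mul_assoc, ← sum_mul, ← Complex.ofReal_sum, sum_walsh_eq_zero hx, Complex.ofReal_zero,
    zero_mul]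

lemma hadamard_projZeroAt_apply_update (v : 𝓗) (i : ι) (x : ι → Fin l → Fin 2)
    (a : Fin l → Fin 2) (e : E) :
    hadamard (projZeroAt i v) (Function.update x i a, e) = hadamard (projZeroAt i v) (x, e) := by
  simp only [hadamard_apply, coordMask_apply]
  congr 1
  refine sum_congr rfl fun y _ => ?_
  split_ifs with hy
  · rw [hadamardKernel_comm, hadamardKernel_update_of_left_eq_zero hy, hadamardKernel_comm]
  · simp

lemma hadamard_apply_eq_zero_of_mem_span {n : ℕ} {G : Set 𝓗}
    (hG : ∀ v ∈ G, ∃ S : Finset ι, n ≤ #S ∧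
      ∀ i ∈ S, ∀ x a e, v (Function.update x i a, e) = v (x, e))
    {v : 𝓗} (hv : v ∈ Submodule.span ℂ G) {q : (ι → Fin l → Fin 2) × E}
    (hq : #{i | q.1 i = 0} < n) : hadamard v q = 0 := by
  induction hv using Submodule.span_induction with
  | mem v hv =>
    obtain ⟨S, hS, hinv⟩ := hG v hv
    obtain ⟨i, hiS, hi⟩ : ∃ i ∈ S, q.1 i ≠ 0 := by
      by_contra! h
      exact hq.not_ge (hS.trans (card_le_card fun i hi => by simpa using h i hi))
    exact hadamard_apply_eq_zero_of_update_invariant (hinv i hiS) hi q.2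
  | zero => simp
  | add v w _ _ hv hw => simp [hv, hw]
  | smul c v _ hv => simp [hv]

variable [Fintype E]

lemma hadamard_isSymmetric : (hadamard : 𝓗 →ₗ[ℂ] 𝓗).IsSymmetric := by
  intro v w
  simp only [PiLp.inner_apply, RCLike.inner_apply', Fintype.sum_prod_type_right, hadamard_apply,
    map_mul, map_sum, Complex.conj_ofReal, mul_sum, sum_mul]
  refine sum_congr rfl fun e _ => ?_
  rw [sum_comm]
  exact sum_congr rfl fun y _ => sum_congr rfl fun x _ => by rw [hadamardKernel_comm]; ring

lemma inner_hadamard_hadamard (v w : 𝓗) : inner ℂ (hadamard v) (hadamard w) = inner ℂ v w := by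
  rw [hadamard_isSymmetric, hadamard_hadamard]

lemma norm_hadamard (v : 𝓗) : ‖hadamard v‖ = ‖v‖ :=
  (hadamard.isometryOfInner inner_hadamard_hadamard).norm_map v

lemma two_pow_mul_norm_sq_projZeroAt_of_update_invariant {v : 𝓗} {i : ι}
    (hv : ∀ x a e, v (Function.update x i a, e) = v (x, e)) :
    2 ^ l * ‖projZeroAt i v‖ ^ 2 = ‖v‖ ^ 2 := by
  rw [norm_sq_coordMask, EuclideanSpace.norm_sq_eq, Fintype.sum_prod_type,
    sum_eq_sum_filter_sum_update i 0, ← univ_product_univ,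
    filter_product_left fun x : ι → Fin l → Fin 2 => x i = 0, sum_product, mul_sum]
  simp_rw [hv, sum_const, card_univ, Fintype.card_fun, Fintype.card_fin, nsmul_eq_mul]
  push_cast
  rfl

variable (E l) in
noncomputable def permuteRegisters (σ : Equiv.Perm ι) : 𝓗 ≃ₗᵢ[ℂ] 𝓗 :=
  LinearIsometryEquiv.piLpCongrLeft 2 ℂ ℂ
    ((σ.arrowCongr (Equiv.refl (Fin l → Fin 2))).prodCongr (Equiv.refl E))

@[simp]
lemma permuteRegisters_apply (σ : Equiv.Perm ι) (v : 𝓗) (x : ι → Fin l → Fin 2) (e : E) :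
    permuteRegisters E l σ v (x, e) = v (x ∘ σ, e) := rfl

lemma hadamard_permuteRegisters (σ : Equiv.Perm ι) (v : 𝓗) :
    hadamard (permuteRegisters E l σ v) = permuteRegisters E l σ (hadamard v) := by
  ext ⟨x, e⟩
  rw [permuteRegisters_apply, hadamard_apply, hadamard_apply]
  conv_rhs => rw [← (σ.symm.arrowCongr (Equiv.refl (Fin l → Fin 2))).sum_comp]
  congr 1
  refine sum_congr rfl fun y _ => ?_
  rw [permuteRegisters_apply, ← hadamardKernel_comp_perm σ]
  rfl

lemma projZeroAt_permuteRegisters (σ : Equiv.Perm ι) (i : ι) (v : 𝓗) :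
    projZeroAt i (permuteRegisters E l σ v) = permuteRegisters E l σ (projZeroAt (σ.symm i) v) := by
  ext ⟨x, e⟩
  simp

lemma norm_projZeroAt_hadamard_eq_of_perm_invariant {ψ : 𝓗} {j : ι}
    (hψ : ∀ σ, ‖projZeroAt j (hadamard (permuteRegisters E l σ ψ))‖ =
      ‖projZeroAt j (hadamard ψ)‖) (i : ι) :
    ‖projZeroAt i (hadamard ψ)‖ = ‖projZeroAt j (hadamard ψ)‖ := by
  rw [← hψ (Equiv.swap j i), hadamard_permuteRegisters, projZeroAt_permuteRegisters,
    LinearIsometryEquiv.norm_map, Equiv.symm_swap, Equiv.swap_apply_left]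

lemma sqrt_sub_sqrt_le_norm_projZeroAt (ψ : 𝓗) (i : ι) :
    √(‖projZeroAt i (hadamard ψ)‖ ^ 2 / 2 ^ l) - √(‖ψ‖ ^ 2 - ‖projZeroAt i (hadamard ψ)‖ ^ 2) ≤
      ‖projZeroAt i ψ‖ := by
  set g := projZeroAt i (hadamard ψ)
  set a := hadamard g
  have hrest : ψ - a = hadamard (hadamard ψ - g) := by
    rw [map_sub, hadamard_hadamard]
  have hpyth : ‖a‖ ^ 2 + ‖ψ - a‖ ^ 2 = ‖ψ‖ ^ 2 := by
    have h := norm_add_sq_eq_norm_sq_add_norm_sq_of_inner_eq_zero (𝕜 := ℂ) a (ψ - a)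
      (by rw [hrest, inner_hadamard_hadamard, inner_coordMask_sub_self])
    rw [add_sub_cancel] at h
    rw [sq, sq, sq, h]
  have hplus : ‖projZeroAt i a‖ = √(‖g‖ ^ 2 / 2 ^ l) := by
    rw [← norm_hadamard g, ← two_pow_mul_norm_sq_projZeroAt_of_update_invariant
      (hadamard_projZeroAt_apply_update _ i), mul_div_cancel_left₀ _ (by positivity),
      Real.sqrt_sq (norm_nonneg _)]
  calc √(‖g‖ ^ 2 / 2 ^ l) - √(‖ψ‖ ^ 2 - ‖g‖ ^ 2)
      ≤ ‖projZeroAt i a‖ - ‖projZeroAt i (a - ψ)‖ := by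
        rw [hplus, ← hpyth, ← norm_hadamard g, add_sub_cancel_left, Real.sqrt_sq (norm_nonneg _),
          norm_sub_rev]
        exact sub_le_sub_left (norm_coordMask_le _ _) _
    _ ≤ ‖projZeroAt i a - projZeroAt i (a - ψ)‖ := norm_sub_norm_le _ _
    _ = ‖projZeroAt i ψ‖ := by rw [← map_sub, sub_sub_cancel]

end Hadamard

lemma le_sq_of_sqrt_sub_sqrt_le {L n m t z : ℝ} (hL : 0 < L) (hn : 0 ≤ n) (hm : 0 < m)
    (hnt : n ≤ m * t) (hz0 : 0 ≤ z) (hz : √(t / L) - √(1 - t) ≤ z) :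
    L⁻¹ * n / m - 2 * (√L)⁻¹ * √(n * (m - n)) / m ≤ z ^ 2 := by
  set A := √(n / (m * L))
  set G := √(1 - n / m)
  have hst : n / m ≤ t := by rwa [div_le_iff₀' hm]
  have hA2 : A ^ 2 = L⁻¹ * n / m := by
    rw [Real.sq_sqrt (by positivity)]; field_simp
  have hAG : A * G = (√L)⁻¹ * √(n * (m - n)) / m := by
    rw [← Real.sqrt_mul (by positivity), ← Real.sqrt_inv, ← Real.sqrt_mul (inv_nonneg.2 hL.le),
      ← Real.sqrt_sq hm.le, ← Real.sqrt_div' _ (sq_nonneg _), Real.sqrt_sq hm.le]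
    congr 1
    field_simp
  have hA : A ≤ √(t / L) := Real.sqrt_le_sqrt (by rw [← div_div]; gcongr)
  have hG : √(1 - t) ≤ G := Real.sqrt_le_sqrt (by linarith)
  rw [← hA2, mul_assoc, mul_div_assoc, ← hAG]
  -- `A² - 2AG ≤ 0` if `A ≤ 2G`; otherwise `z ≥ A - G > 0` and `(A - G)² ≥ A² - 2AG`.
  by_cases hAG2 : A ≤ 2 * G
  · nlinarith [Real.sqrt_nonneg (n / (m * L))]
  · nlinarith [Real.sqrt_nonneg (1 - n / m)]

end SymmetricMeasurement

open SymmetricMeasurement in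
/-- Symmetric measurement lemma: a permutation-symmetric unit state supported on the
subspace `W` spanned by states having at least `n` of the `m` registers in the uniform
superposition `|+^l⟩` yields outcome `0^l` on the first register with probability at
least `2^{-l} n/m - 2^{1-l/2} √(n(m-n))/m`. -/
theorem symmetric_measurement_lemma
    (l m n : ℕ) (hn : 1 ≤ n) (hnm : n ≤ m)
    {E : Type*} [Fintype E]
    (W : Submodule ℂ (EuclideanSpace ℂ ((Fin m → (Fin l → Fin 2)) × E)))
    (hW : W = Submodule.span ℂ
      {v : EuclideanSpace ℂ ((Fin m → (Fin l → Fin 2)) × E) |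
        ∃ (S : Finset (Fin m)) (φ : ((Fin m → (Fin l → Fin 2)) × E) → ℂ),
          n ≤ S.card ∧
          (∀ (x x' : Fin m → (Fin l → Fin 2)) (e : E),
            (∀ i ∉ S, x i = x' i) → φ (x, e) = φ (x', e)) ∧
          v = fun q => (((Real.sqrt (2 ^ l) : ℝ) : ℂ)⁻¹) ^ S.card * φ q})
    (act : Equiv.Perm (Fin m) →
      EuclideanSpace ℂ ((Fin m → (Fin l → Fin 2)) × E) →ₗ[ℂ]
        EuclideanSpace ℂ ((Fin m → (Fin l → Fin 2)) × E))
    (hact : ∀ σ (v : EuclideanSpace ℂ ((Fin m → (Fin l → Fin 2)) × E))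
      (x : Fin m → (Fin l → Fin 2)) (e : E), act σ v (x, e) = v (x ∘ σ, e))
    (ψ : EuclideanSpace ℂ ((Fin m → (Fin l → Fin 2)) × E))
    (hψW : ψ ∈ W) (hψ : ‖ψ‖ = 1)
    (hsym : ∀ (A : EuclideanSpace ℂ ((Fin m → (Fin l → Fin 2)) × E) →ₗ[ℂ]
        EuclideanSpace ℂ ((Fin m → (Fin l → Fin 2)) × E)) (σ : Equiv.Perm (Fin m)),
      ‖A (act σ ψ)‖ = ‖A ψ‖) :
    ((2 : ℝ) ^ l)⁻¹ * n / m -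
        2 * (Real.sqrt (2 ^ l))⁻¹ * Real.sqrt ((n : ℝ) * ((m : ℝ) - n)) / m
      ≤ ∑ q ∈ Finset.univ.filter
          (fun q : (Fin m → (Fin l → Fin 2)) × E => q.1 ⟨0, by omega⟩ = fun _ => 0),
          ‖ψ q‖ ^ 2 := by
  set i₀ : Fin m := ⟨0, by omega⟩
  have hperm : ∀ σ v, act σ v = permuteRegisters E l σ v := fun σ v => by
    ext ⟨x, e⟩
    exact hact σ v x e
  have hfreq : ∀ q : (Fin m → Fin l → Fin 2) × E, #{i | q.1 i = 0} < n → hadamard ψ q = 0 := by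
    refine fun q hq => hadamard_apply_eq_zero_of_mem_span ?_ (hW ▸ hψW) hq
    rintro v ⟨S, φ, hS, hφ, hv⟩
    refine ⟨S, hS, fun i hi x a e => ?_⟩
    simp only [hv, hφ (Function.update x i a) x e fun j hj =>
      Function.update_of_ne (by rintro rfl; exact hj hi) _ _]
  have hmarg := norm_projZeroAt_hadamard_eq_of_perm_invariant (j := i₀) fun σ => by
    rw [← hperm]
    exact hsym (projZeroAt i₀ ∘ₗ hadamard) σ
  have hnt : (n : ℝ) ≤ m * ‖projZeroAt i₀ (hadamard ψ)‖ ^ 2 := by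
    simpa [hmarg, norm_hadamard, hψ] using
      natCast_mul_norm_sq_le_sum_norm_sq_coordMask
        (fun i (q : (Fin m → Fin l → Fin 2) × E) => q.1 i = 0) hfreq
  have hbound := sqrt_sub_sqrt_le_norm_projZeroAt ψ i₀
  rw [hψ, one_pow] at hbound
  exact (le_sq_of_sqrt_sub_sqrt_le (by positivity) n.cast_nonneg (Nat.cast_pos.mpr (by omega)) hnt
    (norm_nonneg _) hbound).trans_eq (norm_sq_coordMask _ ψ)
end

section
/- Let |\psi\rangle = |+^l\rangle_1 |\psi^+\rangle + |\psi^-\rangle be a unit vector in C^{2^l} \otimes H_E where \langle +^l|_1 |\psi^-\rangle = 0 and \||\psi^+\rangle\|^2 \ge p. Then \|\langle 0^l|_1 |\psi\rangle\|^2 \ge 2^{-l} p - 2^{1-l/2}\sqrt{p(1-p)}. -/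
/-!
Write the slice `z = 0^l` of `ψ` as `u + v` with `u = 2^{-l/2} ψ⁺` and `v = ψ⁻(0^l, ·)`.
Because `ψ⁻` sums to zero over the first register it is orthogonal to `|+^l⟩ψ⁺`, so
`1 = ‖ψ‖² = ‖ψ⁺‖² + ‖ψ⁻‖²`, whence `‖v‖² ≤ 1 - ‖ψ⁺‖² ≤ 1 - p`,
while `‖u‖ ≥ 2^{-l/2} √p`.
The reverse triangle inequality `‖u + v‖ ≥ ‖u‖ - ‖v‖` then gives the bound when
`2^{-l/2} √p > ‖v‖`; otherwise the bound is nonpositive.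
-/

open Finset

theorem sq_sub_two_mul_le_norm_add_sq {F : Type*} [SeminormedAddCommGroup F] {u v : F}
    {α β : ℝ} (hα : 0 ≤ α) (hu : α ≤ ‖u‖) (hv : ‖v‖ ≤ β) :
    α ^ 2 - 2 * α * β ≤ ‖u + v‖ ^ 2 := by
  have htri : ‖u‖ - ‖v‖ ≤ ‖u + v‖ := norm_sub_le_norm_add u v
  rcases le_or_gt α ‖v‖ with hαv | hvα
  · nlinarith [norm_nonneg (u + v)]
  · nlinarith [norm_nonneg v]

theorem sum_norm_add_sq_of_sum_eq_zero {𝕜 F ι : Type*} [RCLike 𝕜] [NormedAddCommGroup F]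
    [InnerProductSpace 𝕜 F] (s : Finset ι) (w : F) (f : ι → F) (hf : ∑ i ∈ s, f i = 0) :
    ∑ i ∈ s, ‖w + f i‖ ^ 2 = #s * ‖w‖ ^ 2 + ∑ i ∈ s, ‖f i‖ ^ 2 := by
  have hcross : ∑ i ∈ s, RCLike.re (inner 𝕜 w (f i)) = 0 := by
    rw [← map_sum, ← inner_sum, hf, inner_zero_right, map_zero]
  simp only [norm_add_sq (𝕜 := 𝕜), sum_add_distrib, ← mul_sum, hcross, sum_const, nsmul_eq_mul]
  ring

theorem card_mul_sum_norm_sq_add_sum_norm_sq_le {𝕜 ι E : Type*} [RCLike 𝕜] [Fintype ι]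
    [Fintype E]
    (ψ : EuclideanSpace 𝕜 (ι × E)) (a : E → 𝕜) (φ : ι × E → 𝕜)
    (hdecomp : ∀ z e, ψ (z, e) = a e + φ (z, e)) (horth : ∀ e, ∑ z, φ (z, e) = 0) (z₀ : ι) :
    Fintype.card ι * ∑ e, ‖a e‖ ^ 2 + ∑ e, ‖φ (z₀, e)‖ ^ 2 ≤ ‖ψ‖ ^ 2 := by
  have hslice : ∀ e, ‖φ (z₀, e)‖ ^ 2 ≤ ∑ z, ‖φ (z, e)‖ ^ 2 := fun e =>
    single_le_sum (f := fun z => ‖φ (z, e)‖ ^ 2) (fun _ _ => by positivity) (mem_univ z₀)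
  calc Fintype.card ι * ∑ e, ‖a e‖ ^ 2 + ∑ e, ‖φ (z₀, e)‖ ^ 2
      ≤ ∑ e, (Fintype.card ι * ‖a e‖ ^ 2 + ∑ z, ‖φ (z, e)‖ ^ 2) := by
        rw [sum_add_distrib, mul_sum]
        gcongr with e
        exact hslice e
    _ = ∑ e, ∑ z, ‖ψ (z, e)‖ ^ 2 := by
        refine sum_congr rfl fun e _ => ?_
        simp only [hdecomp]
        rw [sum_norm_add_sq_of_sum_eq_zero (𝕜 := 𝕜) _ _ _ (horth e), card_univ]
    _ = ‖ψ‖ ^ 2 := by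
        rw [EuclideanSpace.norm_sq_eq, Fintype.sum_prod_type, sum_comm]

theorem measure_zero_lower_bound_general
    (l : ℕ) {E : Type*} [Fintype E]
    (p : ℝ) (hp0 : 0 ≤ p)
    (ψ : EuclideanSpace ℂ ((Fin l → Fin 2) × E))
    (ψplus : E → ℂ) (ψminus : (Fin l → Fin 2) × E → ℂ)
    (hdecomp : ∀ z e, ψ (z, e) = ((Real.sqrt (2 ^ l) : ℝ) : ℂ)⁻¹ * ψplus e + ψminus (z, e))
    (horth : ∀ e, ∑ z : Fin l → Fin 2, ψminus (z, e) = 0)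
    (hnorm : ‖ψ‖ = 1)
    (hplus : p ≤ ∑ e, ‖ψplus e‖ ^ 2) :
    ((2 : ℝ) ^ l)⁻¹ * p - 2 * (Real.sqrt (2 ^ l))⁻¹ * Real.sqrt (p * (1 - p))
      ≤ ∑ e, ‖ψ (fun _ => 0, e)‖ ^ 2 := by
  set c : ℝ := (Real.sqrt (2 ^ l))⁻¹
  have hc : c ^ 2 = ((2 : ℝ) ^ l)⁻¹ := by rw [inv_pow, Real.sq_sqrt (by positivity)]
  let u : EuclideanSpace ℂ E := WithLp.toLp 2 fun e => ((Real.sqrt (2 ^ l) : ℝ) : ℂ)⁻¹ * ψplus e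
  let v : EuclideanSpace ℂ E := WithLp.toLp 2 fun e => ψminus (fun _ => 0, e)
  have hu : ‖u‖ ^ 2 = c ^ 2 * ∑ e, ‖ψplus e‖ ^ 2 := by
    simp [u, c, EuclideanSpace.norm_sq_eq, mul_pow, mul_sum]
  have hmass : 2 ^ l * ‖u‖ ^ 2 + ‖v‖ ^ 2 ≤ 1 := by
    have := card_mul_sum_norm_sq_add_sum_norm_sq_le ψ _ ψminus hdecomp horth (fun _ => 0)
    simpa [EuclideanSpace.norm_sq_eq, hnorm, u, v] using this
  have hα : c * √p ≤ ‖u‖ := by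
    rw [← sq_le_sq₀ (by positivity) (norm_nonneg u), mul_pow, Real.sq_sqrt hp0, hu]
    gcongr
  have hβ : ‖v‖ ≤ √(1 - p) := by
    have hA : 2 ^ l * ‖u‖ ^ 2 = ∑ e, ‖ψplus e‖ ^ 2 := by
      rw [hu, hc, ← mul_assoc, mul_inv_cancel₀ (by positivity), one_mul]
    exact Real.le_sqrt_of_sq_le (by linarith)
  have hS : ∑ e, ‖ψ (fun _ => 0, e)‖ ^ 2 = ‖u + v‖ ^ 2 := by
    simp [EuclideanSpace.norm_sq_eq, hdecomp, u, v]
  rw [hS, Real.sqrt_mul hp0, ← hc]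
  convert sq_sub_two_mul_le_norm_add_sq (by positivity) hα hβ using 1
  rw [mul_pow, Real.sq_sqrt hp0]
  ring

/-- Single-register measurement step: if `ψ = |+^l⟩₁|ψ⁺⟩ + |ψ⁻⟩` is a unit vector with
`⟨+^l|₁ψ⁻⟩ = 0` and `‖ψ⁺‖² ≥ p`, then the probability of measuring `0^l` on the first
register is at least `2^{-l} p - 2^{1-l/2} √(p(1-p))`. -/
theorem measure_zero_lower_bound
    (l : ℕ) {E : Type*} [Fintype E]
    (p : ℝ) (hp0 : 0 ≤ p) (hp1 : p ≤ 1)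
    (ψ : EuclideanSpace ℂ ((Fin l → Fin 2) × E))
    (ψplus : E → ℂ) (ψminus : (Fin l → Fin 2) × E → ℂ)
    (hdecomp : ∀ z e, ψ (z, e) = ((Real.sqrt (2 ^ l) : ℝ) : ℂ)⁻¹ * ψplus e + ψminus (z, e))
    (horth : ∀ e, ∑ z : Fin l → Fin 2, ψminus (z, e) = 0)
    (hnorm : ‖ψ‖ = 1)
    (hplus : p ≤ ∑ e, ‖ψplus e‖ ^ 2) :
    ((2 : ℝ) ^ l)⁻¹ * p - 2 * (Real.sqrt (2 ^ l))⁻¹ * Real.sqrt (p * (1 - p))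
      ≤ ∑ e, ‖ψ (fun _ => 0, e)‖ ^ 2 :=
  measure_zero_lower_bound_general l p hp0 ψ ψplus ψminus hdecomp horth hnorm hplus
end

section
/- Let U, O be unitaries, \Pi an orthogonal projection on a finite-dimensional Hilbert space, and |\phi_0\rangle a unit vector. Define |\tilde\psi_i\rangle = \Pi (UO(1-\Pi))^{i-1}|\phi_0\rangle and \epsilon_i = \|\Pi (UO)^{i-1} |\phi_0\rangle\|^2. Then \sum_{i=1}^{q} \|\tilde\psi_i\|^2 = 1 - \|(UO(1-\Pi))^q |\phi_0\rangle\|^2 \le 4 \sum_{i=1}^{q} \epsilon_i. -/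
open scoped InnerProductSpace

/-!
Write `A = UO` and `B = A(1 - Π)`. As `A` is an isometry, one step of `B` removes exactly the
mass `‖Π x‖²` from `x`, so the fired masses `‖Π Bⁱ φ₀‖²` telescope to `1 - ‖B^q φ₀‖²`.
For the bound, the deviation `dᵢ = Aⁱ φ₀ - Bⁱ φ₀` evolves by
`d_{i+1} = A((1 - Π) dᵢ + Π Aⁱ φ₀)`, so `‖d_{i+1}‖² = ‖dᵢ‖² - ‖Π dᵢ‖² + ‖Π Aⁱ φ₀‖²`, and
telescoping gives `∑ ‖Π dᵢ‖² ≤ ∑ ‖Π Aⁱ φ₀‖²`. Finally `‖Π Bⁱ φ₀‖ ≤ ‖Π Aⁱ φ₀‖ + ‖Π dᵢ‖`, and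
`(a + c)² ≤ 2(a² + c²)` yields the factor `4`.
-/

theorem Finset.sum_sq_le_four_mul_sum_sq_of_le_add {ι R : Type*} [CommRing R] [LinearOrder R]
    [IsStrictOrderedRing R] {s : Finset ι} {a b c : ι → R} (hb : ∀ i ∈ s, 0 ≤ b i)
    (hbac : ∀ i ∈ s, b i ≤ a i + c i) (hca : ∑ i ∈ s, c i ^ 2 ≤ ∑ i ∈ s, a i ^ 2) :
    ∑ i ∈ s, b i ^ 2 ≤ 4 * ∑ i ∈ s, a i ^ 2 :=
  calc ∑ i ∈ s, b i ^ 2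
      ≤ ∑ i ∈ s, 2 * (a i ^ 2 + c i ^ 2) :=
        Finset.sum_le_sum fun i hi ↦ (pow_le_pow_left₀ (hb i hi) (hbac i hi) 2).trans add_sq_le
    _ = 2 * (∑ i ∈ s, a i ^ 2 + ∑ i ∈ s, c i ^ 2) := by
      rw [← Finset.mul_sum, Finset.sum_add_distrib]
    _ ≤ 4 * ∑ i ∈ s, a i ^ 2 := by linarith

namespace LinearMap.IsSymmetricProjection

variable {𝕜 E : Type*} [RCLike 𝕜] [SeminormedAddCommGroup E] [InnerProductSpace 𝕜 E]
  {P : E →ₗ[𝕜] E}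

theorem inner_apply_sub_apply_eq_zero (hP : P.IsSymmetricProjection) (u v : E) :
    ⟪P u, v - P v⟫_𝕜 = 0 := by
  rw [hP.isSymmetric, map_sub, ← Module.End.mul_apply, hP.isIdempotentElem.eq, sub_self,
    inner_zero_right]

theorem norm_sub_apply_add_apply_sq (hP : P.IsSymmetricProjection) (u v : E) :
    ‖v - P v + P u‖ ^ 2 = ‖v - P v‖ ^ 2 + ‖P u‖ ^ 2 := by
  have h : ⟪v - P v, P u⟫_𝕜 = 0 := by
    rw [← inner_conj_symm, hP.inner_apply_sub_apply_eq_zero, map_zero]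
  simp only [sq, norm_add_sq_eq_norm_sq_add_norm_sq_of_inner_eq_zero _ _ h]

theorem norm_sq_eq_norm_apply_sq_add_norm_sub_apply_sq (hP : P.IsSymmetricProjection) (v : E) :
    ‖v‖ ^ 2 = ‖P v‖ ^ 2 + ‖v - P v‖ ^ 2 := by
  rw [add_comm, ← hP.norm_sub_apply_add_apply_sq, sub_add_cancel]

variable {A : E →ₗ[𝕜] E}

theorem norm_comp_id_sub_apply_sq (hP : P.IsSymmetricProjection) (hA : ∀ x, ‖A x‖ = ‖x‖)
    (v : E) : ‖(A ∘ₗ (id - P)) v‖ ^ 2 = ‖v‖ ^ 2 - ‖P v‖ ^ 2 := by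
  rw [comp_apply, sub_apply, id_apply, hA, hP.norm_sq_eq_norm_apply_sq_add_norm_sub_apply_sq v]
  ring

theorem sum_norm_apply_pow_comp_id_sub_sq (hP : P.IsSymmetricProjection)
    (hA : ∀ x, ‖A x‖ = ‖x‖) (v : E) (q : ℕ) :
    ∑ i ∈ Finset.range q, ‖P (((A ∘ₗ (id - P)) ^ i) v)‖ ^ 2
      = ‖v‖ ^ 2 - ‖((A ∘ₗ (id - P)) ^ q) v‖ ^ 2 := by
  have hstep (i : ℕ) : ‖P (((A ∘ₗ (id - P)) ^ i) v)‖ ^ 2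
      = ‖((A ∘ₗ (id - P)) ^ i) v‖ ^ 2 - ‖((A ∘ₗ (id - P)) ^ (i + 1)) v‖ ^ 2 := by
    rw [pow_succ' (A ∘ₗ (id - P)), Module.End.mul_apply, hP.norm_comp_id_sub_apply_sq hA]
    ring
  simp_rw [hstep, Finset.sum_range_sub', pow_zero, Module.End.one_apply]

theorem norm_apply_sub_comp_id_sub_apply_sq (hP : P.IsSymmetricProjection)
    (hA : ∀ x, ‖A x‖ = ‖x‖) (z y : E) :
    ‖A z - (A ∘ₗ (id - P)) y‖ ^ 2 = ‖z - y‖ ^ 2 - ‖P (z - y)‖ ^ 2 + ‖P z‖ ^ 2 := by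
  have h : A z - (A ∘ₗ (id - P)) y = A (z - y - P (z - y) + P z) := by
    rw [comp_apply, ← map_sub]
    congr 1
    simp only [sub_apply, id_apply, map_sub]
    abel
  rw [h, hA, hP.norm_sub_apply_add_apply_sq,
    hP.norm_sq_eq_norm_apply_sq_add_norm_sub_apply_sq (z - y)]
  ring

theorem sum_norm_apply_pow_sub_pow_sq_le (hP : P.IsSymmetricProjection)
    (hA : ∀ x, ‖A x‖ = ‖x‖) (v : E) (q : ℕ) :
    ∑ i ∈ Finset.range q, ‖P ((A ^ i) v - ((A ∘ₗ (id - P)) ^ i) v)‖ ^ 2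
      ≤ ∑ i ∈ Finset.range q, ‖P ((A ^ i) v)‖ ^ 2 := by
  set r : ℕ → ℝ := fun i ↦ ‖(A ^ i) v - ((A ∘ₗ (id - P)) ^ i) v‖ ^ 2
  have hstep (i : ℕ) : ‖P ((A ^ i) v - ((A ∘ₗ (id - P)) ^ i) v)‖ ^ 2 - ‖P ((A ^ i) v)‖ ^ 2
      = r i - r (i + 1) := by
    simp only [r]
    rw [pow_succ' A, pow_succ' (A ∘ₗ (id - P)), Module.End.mul_apply, Module.End.mul_apply,
      hP.norm_apply_sub_comp_id_sub_apply_sq hA]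
    ring
  have htel : ∑ i ∈ Finset.range q, (‖P ((A ^ i) v - ((A ∘ₗ (id - P)) ^ i) v)‖ ^ 2
      - ‖P ((A ^ i) v)‖ ^ 2) = -r q := by
    simp_rw [hstep, Finset.sum_range_sub', r, pow_zero, sub_self, norm_zero]
    ring
  have hr : 0 ≤ r q := sq_nonneg _
  rw [Finset.sum_sub_distrib] at htel
  linarith

theorem sum_norm_apply_pow_comp_id_sub_sq_le (hP : P.IsSymmetricProjection)
    (hA : ∀ x, ‖A x‖ = ‖x‖) (v : E) (q : ℕ) :
    ∑ i ∈ Finset.range q, ‖P (((A ∘ₗ (id - P)) ^ i) v)‖ ^ 2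
      ≤ 4 * ∑ i ∈ Finset.range q, ‖P ((A ^ i) v)‖ ^ 2 := by
  refine Finset.sum_sq_le_four_mul_sum_sq_of_le_add (fun _ _ ↦ norm_nonneg _) (fun i _ ↦ ?_)
    (hP.sum_norm_apply_pow_sub_pow_sq_le hA v q)
  rw [map_sub]
  exact norm_le_norm_add_norm_sub _ _

end LinearMap.IsSymmetricProjection

theorem fired_components_bound_general
    {H : Type*} [NormedAddCommGroup H] [InnerProductSpace ℂ H]
    (U O : H →ₗ[ℂ] H)
    (hU : ∀ x : H, ‖U x‖ = ‖x‖)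
    (hO : ∀ x : H, ‖O x‖ = ‖x‖)
    (Pi : H →ₗ[ℂ] H)
    (hPiIdem : Pi ∘ₗ Pi = Pi) (hPiSa : ∀ x y : H, ⟪Pi x, y⟫_ℂ = ⟪x, Pi y⟫_ℂ)
    (φ0 : H) (hφ0 : ‖φ0‖ = 1) (q : ℕ)
    (A B : H →ₗ[ℂ] H)
    (hA : A = U ∘ₗ O) (hB : B = A ∘ₗ (LinearMap.id - Pi)) :
    (∑ i ∈ Finset.range q, ‖Pi ((B ^ i) φ0)‖ ^ 2 = 1 - ‖(B ^ q) φ0‖ ^ 2) ∧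
    (∑ i ∈ Finset.range q, ‖Pi ((B ^ i) φ0)‖ ^ 2
        ≤ 4 * ∑ i ∈ Finset.range q, ‖Pi ((A ^ i) φ0)‖ ^ 2) := by
  have hPi : Pi.IsSymmetricProjection := ⟨hPiIdem, hPiSa⟩
  have hAisom (x : H) : ‖A x‖ = ‖x‖ := by rw [hA, LinearMap.comp_apply, hU, hO]
  subst hB
  refine ⟨?_, hPi.sum_norm_apply_pow_comp_id_sub_sq_le hAisom φ0 q⟩
  rw [hPi.sum_norm_apply_pow_comp_id_sub_sq hAisom, hφ0, one_pow]

/-- The squared norms of the components fired off by the projection `Π` sum to the missed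
mass `1 - ‖(UO(1-Π))^q φ₀‖²`, which is at most `4 ∑ ‖Π (UO)^i φ₀‖²` by the quantum union
bound. -/
theorem fired_components_bound
    {H : Type*} [NormedAddCommGroup H] [InnerProductSpace ℂ H] [FiniteDimensional ℂ H]
    (U O : H →ₗ[ℂ] H)
    (hU : ∀ x : H, ‖U x‖ = ‖x‖) (hUsurj : Function.Surjective U)
    (hO : ∀ x : H, ‖O x‖ = ‖x‖) (hOsurj : Function.Surjective O)
    (Pi : H →ₗ[ℂ] H)
    (hPiIdem : Pi ∘ₗ Pi = Pi) (hPiSa : ∀ x y : H, ⟪Pi x, y⟫_ℂ = ⟪x, Pi y⟫_ℂ)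
    (φ0 : H) (hφ0 : ‖φ0‖ = 1) (q : ℕ) (hq : 1 ≤ q)
    (A B : H →ₗ[ℂ] H)
    (hA : A = U ∘ₗ O) (hB : B = A ∘ₗ (LinearMap.id - Pi)) :
    (∑ i ∈ Finset.range q, ‖Pi ((B ^ i) φ0)‖ ^ 2 = 1 - ‖(B ^ q) φ0‖ ^ 2) ∧
    (∑ i ∈ Finset.range q, ‖Pi ((B ^ i) φ0)‖ ^ 2
        ≤ 4 * ∑ i ∈ Finset.range q, ‖Pi ((A ^ i) φ0)‖ ^ 2) :=
  fired_components_bound_general U O hU hO Pi hPiIdem hPiSa φ0 hφ0 q A B hA hB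
end

section
/- Let c > 0 be a constant and let k, l be integers with 2^{1/c} \le k \le 2^{2^l/(256 c)} and l \ge 14. Set N = c \cdot 2^l \cdot \log k, \mu = 2^{-l} k N, \gamma = 4 \cdot 2^{-l}, and \underline{\mu}' = 2^{-l} k [N - 1 - \gamma(1 + 4\cdot 2^l + \log(4\gamma/\log k)) - 4\sqrt{2^l \gamma N}]. Then \mu - \underline{\mu}' \le (3/4) k and the \delta defined by \delta = ((1 - 8\cdot 2^{-l})k - (\mu - \underline{\mu}'))/(2\mu) satisfies \delta \ge 1/(8 c \log k), and hence \delta^2 \mu \ge k / (64 c \log k). -/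
/-!
With `L = 2^l` and `G = log₂ k`, the upper bound on `k` says `N = cLG ≤ (L/16)²`, and `γ = 4/L`
makes `4√(LγN) = 8√N ≤ L/2` while the logarithmic correction is nonpositive because
`G ≥ 1 ≥ 16/L`. So `μ - μ' ≤ L⁻¹k(17 + 4/L + L/2) ≤ (3/4 - 8/L)k`, the numerator of `δ` is at
least `k/4`, and since `μ = kcG` this gives `δ ≥ 1/(8cG)`.
-/

open Real

namespace ParameterBalancing

lemma two_le_natCast_of_two_rpow_le {c : ℝ} (hc : 0 < c) {k : ℕ} (hk : (2 : ℝ) ^ (1 / c) ≤ k) :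
    (2 : ℝ) ≤ k := by
  have hk1 : (1 : ℝ) < k := (one_lt_rpow one_lt_two (by positivity)).trans_le hk
  exact_mod_cast (Nat.one_lt_cast.mp hk1 : 1 < k)

lemma correction_le {L G N γ : ℝ} (hL : 16 ≤ L) (hG : 1 ≤ G) (hN : N ≤ (L / 16) ^ 2)
    (hγ : γ = 4 * L⁻¹) :
    1 + γ * (1 + 4 * L + logb 2 (4 * γ / G)) + 4 * √(L * γ * N) ≤ 17 + 4 * L⁻¹ + L / 2 := by
  subst hγ
  have hlog : logb 2 (4 * (4 * L⁻¹) / G) ≤ 0 := by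
    refine logb_nonpos one_lt_two (by positivity) ?_
    rw [div_le_one (by positivity), ← div_eq_mul_inv, ← mul_div_assoc, div_le_iff₀ (by positivity)]
    nlinarith
  have hsqrt : √(L * (4 * L⁻¹) * N) ≤ L / 8 := by
    have hLγ : L * (4 * L⁻¹) = 4 := by field_simp
    rw [sqrt_le_left (by positivity), hLγ]
    linarith
  have hexpand : 4 * L⁻¹ * (1 + 4 * L) = 4 * L⁻¹ + 16 := by field_simp; ring
  nlinarith [mul_nonpos_of_nonneg_of_nonpos (by positivity : 0 ≤ 4 * L⁻¹) hlog]

lemma inv_mul_correction_le {L : ℝ} (hL : 128 ≤ L) :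
    L⁻¹ * (17 + 4 * L⁻¹ + L / 2) ≤ 3 / 4 - 8 * L⁻¹ := by
  have hinv : L⁻¹ ≤ 1 / 128 := by rw [inv_le_comm₀ (by positivity) (by norm_num)]; linarith
  have hexpand : L⁻¹ * (17 + 4 * L⁻¹ + L / 2) = 17 * L⁻¹ + 4 * L⁻¹ ^ 2 + 1 / 2 := by field_simp
  nlinarith [inv_pos.2 (by positivity : 0 < L)]

lemma deficit_le {L G N γ k : ℝ} (hL : 128 ≤ L) (hG : 1 ≤ G) (hN : N ≤ (L / 16) ^ 2)
    (hγ : γ = 4 * L⁻¹) (hk : 0 ≤ k) :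
    L⁻¹ * k * N - L⁻¹ * k *
        (N - 1 - γ * (1 + 4 * L + logb 2 (4 * γ / G)) - 4 * √(L * γ * N))
      ≤ (3 / 4 - 8 * L⁻¹) * k := by
  calc _ = L⁻¹ * (1 + γ * (1 + 4 * L + logb 2 (4 * γ / G)) + 4 * √(L * γ * N)) * k := by ring
    _ ≤ L⁻¹ * (17 + 4 * L⁻¹ + L / 2) * k := by
      have := correction_le (by linarith) hG hN hγ
      gcongr
    _ ≤ (3 / 4 - 8 * L⁻¹) * k := by gcongr; exact inv_mul_correction_le hL

end ParameterBalancing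

open ParameterBalancing in
/-- Parameter-balancing estimates from the negligibility lemma: with
`N = c·2^l·log₂ k`, `μ = 2^{-l} k N`, `γ = 4·2^{-l}` and `μ'` the corrected mean,
one has `μ - μ' ≤ (3/4)k`, `δ ≥ 1/(8c log₂ k)` and `δ²μ ≥ k/(64 c log₂ k)`. -/
theorem parameter_balancing
    (c : ℝ) (hc : 0 < c) (k l : ℕ)
    (hk1 : (2 : ℝ) ^ (1 / c) ≤ (k : ℝ))
    (hk2 : (k : ℝ) ≤ (2 : ℝ) ^ ((2 : ℝ) ^ (l : ℕ) / (256 * c)))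
    (hl : 14 ≤ l)
    (N μ γ μ' δ : ℝ)
    (hN : N = c * 2 ^ l * Real.logb 2 k)
    (hμ : μ = ((2 : ℝ) ^ l)⁻¹ * k * N)
    (hγ : γ = 4 * ((2 : ℝ) ^ l)⁻¹)
    (hμ' : μ' = ((2 : ℝ) ^ l)⁻¹ * k *
      (N - 1 - γ * (1 + 4 * 2 ^ l + Real.logb 2 (4 * γ / Real.logb 2 k))
        - 4 * Real.sqrt (2 ^ l * γ * N)))
    (hδ : δ = ((1 - 8 * ((2 : ℝ) ^ l)⁻¹) * k - (μ - μ')) / (2 * μ)) :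
    μ - μ' ≤ 3 / 4 * k ∧
    1 / (8 * c * Real.logb 2 k) ≤ δ ∧
    (k : ℝ) / (64 * c * Real.logb 2 k) ≤ δ ^ 2 * μ := by
  set L : ℝ := 2 ^ l
  set G := logb 2 k
  have hL : 128 ≤ L := le_trans (by norm_num) (pow_le_pow_right₀ one_le_two (by omega : 7 ≤ l))
  have hk : (2 : ℝ) ≤ k := two_le_natCast_of_two_rpow_le hc hk1
  have hG : 1 ≤ G := (le_logb_iff_rpow_le one_lt_two (by positivity)).2 (by simpa using hk)
  have hG_le : G ≤ L / (256 * c) := (logb_le_iff_le_rpow one_lt_two (by positivity)).2 hk2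
  have hN_le : N ≤ (L / 16) ^ 2 := by
    calc N ≤ c * L * (L / (256 * c)) := by rw [hN]; gcongr
      _ = (L / 16) ^ 2 := by field_simp; ring
  have hdeficit : μ - μ' ≤ (3 / 4 - 8 * L⁻¹) * k := by
    rw [hμ, hμ']; exact deficit_le hL hG hN_le hγ (by positivity)
  have hμ_eq : μ = k * c * G := by rw [hμ, hN]; field_simp
  have hδ_ge : 1 / (8 * c * G) ≤ δ := by
    rw [hδ, le_div_iff₀ (by rw [hμ_eq]; positivity)]
    calc 1 / (8 * c * G) * (2 * μ) = k / 4 := by rw [hμ_eq]; field_simp; ring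
      _ ≤ _ := by linarith
  refine ⟨by nlinarith [inv_pos.2 (by positivity : 0 < L)], hδ_ge, ?_⟩
  calc (k : ℝ) / (64 * c * G) = (1 / (8 * c * G)) ^ 2 * μ := by rw [hμ_eq]; field_simp; ring
    _ ≤ δ ^ 2 * μ := by gcongr; rw [hμ_eq]; positivity
end
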